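/- Let q₀ be a rotationally invariant density on R^d with ∫ y₁² q₀(y) dy < ∞, Σ positive definite, and q(x) = det(Σ)^{-1/2} q₀(Σ^{-1/2} x). Then for any nonzero vector ℓ ∈ R^d, ∫_{{y : ⟨ℓ,y⟩ ≥ 0}} y ⟨ℓ,y⟩ q(y) dy = m₂(q₀) Σℓ, where m₂(q₀) = ∫ y₁² 1{y₁ ≥ 0} q₀(y) dy > 0. -/

import Mathlib

/-!
Substituting `y = S z` turns the integral into `S` applied to `∫_{⟨Sℓ, z⟩ ≥ 0} ⟨Sℓ, z⟩ q₀(z) z dz`.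
For any `w ≠ 0`, an orthogonal `U` with `U eᵢ = w / |w|` turns `∫_{⟨w, z⟩ ≥ 0} ⟨w, z⟩ q₀(z) z dz`
into `|w| U ∫_{zᵢ ≥ 0} zᵢ q₀(z) z dz`, and the reflection `zⱼ ↦ -zⱼ` (`j ≠ i`) preserves the
half-space and `q₀` but flips the sign of the `j`-th coordinate of the last integral, so only its
`i`-th coordinate `m₂` survives. The reflection `zᵢ ↦ -zᵢ` shows that `zᵢ² q₀` has the same
integral `m₂` over both half-spaces; if `m₂ = 0`, then `q₀` vanishes a.e. off the null hyperplane
`zᵢ = 0`, contradicting `∫ q₀ = 1`.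
-/

open MeasureTheory Matrix

variable {ι : Type*} [Fintype ι]

noncomputable def halfSpaceMoment (q₀ : (ι → ℝ) → ℝ) (i : ι) : ℝ :=
  ∫ z in {z | 0 ≤ z i}, z i ^ 2 * q₀ z

lemma integrable_mul_coord_mul_coord {q₀ : (ι → ℝ) → ℝ} (hmeas : AEStronglyMeasurable q₀)
    (hmom : Integrable fun z : ι → ℝ => ‖z‖ ^ 2 * q₀ z) (i j : ι) :
    Integrable fun z => q₀ z * z i * z j := by
  refine hmom.mono ((hmeas.mul (continuous_apply i).aestronglyMeasurable).mul
    (continuous_apply j).aestronglyMeasurable) (ae_of_all _ fun z => ?_)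
  have hi := norm_le_pi_norm z i
  have hj := norm_le_pi_norm z j
  simp only [norm_mul, norm_pow, norm_norm]
  calc ‖q₀ z‖ * ‖z i‖ * ‖z j‖ = ‖z i‖ * ‖z j‖ * ‖q₀ z‖ := by ring
    _ ≤ ‖z‖ ^ 2 * ‖q₀ z‖ := by rw [sq]; gcongr

variable [DecidableEq ι]

namespace Matrix

lemma exists_continuousLinearEquiv_coe_eq_mulVec {M : Matrix ι ι ℝ} (hM : M.det ≠ 0) :
    ∃ L : (ι → ℝ) ≃L[ℝ] (ι → ℝ), ⇑L = M.mulVec :=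
  ⟨(M.toLinearEquiv (Pi.basisFun ℝ ι) (isUnit_iff_ne_zero.2 hM)).toContinuousLinearEquiv,
    funext fun x => by simp [toLin_eq_toLin']⟩

lemma integral_mulVec {X : Type*} [MeasurableSpace X] {μ : Measure X} {M : Matrix ι ι ℝ}
    (hM : M.det ≠ 0) (f : X → ι → ℝ) : ∫ x, M *ᵥ f x ∂μ = M *ᵥ ∫ x, f x ∂μ := by
  obtain ⟨L, hL⟩ := exists_continuousLinearEquiv_coe_eq_mulVec hM
  simpa only [hL] using L.integral_comp_comm f

lemma setIntegral_preimage_mulVec {E : Type*} [NormedAddCommGroup E] [NormedSpace ℝ E]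
    {M : Matrix ι ι ℝ} (hM : M.det ≠ 0) (f : (ι → ℝ) → E) (s : Set (ι → ℝ)) :
    ∫ x in M.mulVec ⁻¹' s, f (M *ᵥ x) = |M.det|⁻¹ • ∫ y in s, f y := by
  obtain ⟨L, hL⟩ := exists_continuousLinearEquiv_coe_eq_mulVec hM
  have hemb : MeasurableEmbedding M.mulVec := hL ▸ L.toHomeomorph.measurableEmbedding
  have hmap : Measure.map M.mulVec volume = ENNReal.ofReal |M.det|⁻¹ • volume := by
    rw [← abs_inv, ← funext (toLin'_apply M)]
    exact Real.map_matrix_volume_pi_eq_smul_volume_pi hM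
  rw [← hemb.setIntegral_map, hmap, Measure.restrict_smul, integral_smul_measure,
    ENNReal.toReal_ofReal (by positivity)]

lemma abs_det_eq_one_of_mul_transpose_eq_one {U : Matrix ι ι ℝ} (hU : U * Uᵀ = 1) :
    |U.det| = 1 := by
  have h := congrArg det hU
  rw [det_mul, det_transpose, det_one, ← sq, ← sq_abs] at h
  exact (pow_eq_one_iff_of_nonneg (abs_nonneg _) two_ne_zero).1 h

lemma det_ne_zero_of_mul_transpose_eq_one {U : Matrix ι ι ℝ} (hU : U * Uᵀ = 1) : U.det ≠ 0 :=
  abs_ne_zero.1 ((abs_det_eq_one_of_mul_transpose_eq_one hU).trans_ne one_ne_zero)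

lemma setIntegral_preimage_mulVec_of_mul_transpose_eq_one {E : Type*} [NormedAddCommGroup E]
    [NormedSpace ℝ E] {U : Matrix ι ι ℝ} (hU : U * Uᵀ = 1) (f : (ι → ℝ) → E)
    (s : Set (ι → ℝ)) : ∫ x in U.mulVec ⁻¹' s, f (U *ᵥ x) = ∫ y in s, f y := by
  rw [setIntegral_preimage_mulVec (det_ne_zero_of_mul_transpose_eq_one hU),
    abs_det_eq_one_of_mul_transpose_eq_one hU, inv_one, one_smul]

lemma exists_mul_transpose_eq_one_mulVec_single (i : ι) {u : ι → ℝ} (hu : u ⬝ᵥ u = 1) :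
    ∃ U : Matrix ι ι ℝ, U * Uᵀ = 1 ∧ U *ᵥ Pi.single i 1 = u := by
  have hnorm : ‖WithLp.toLp 2 u‖ = 1 := by
    rw [EuclideanSpace.norm_eq, Real.sqrt_eq_one, ← hu]
    simp [dotProduct, sq]
  have horth : Orthonormal ℝ (({i} : Set ι).domRestrict fun _ => WithLp.toLp 2 u) :=
    ⟨fun _ => hnorm, fun j k hjk => absurd (Subsingleton.elim j k) hjk⟩
  obtain ⟨b, hb⟩ := horth.exists_orthonormalBasis_extension_of_card_eq
    (by simp [finrank_euclideanSpace])
  refine ⟨(EuclideanSpace.basisFun ι ℝ).toBasis.toMatrix b, (mem_orthogonalGroup_iff ι ℝ).1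
    ((EuclideanSpace.basisFun ι ℝ).toMatrix_orthonormalBasis_mem_orthogonal b), ?_⟩
  ext j
  simp [Module.Basis.toMatrix_apply, hb i rfl]

lemma dotProduct_mulVec_of_mulVec_single_eq {U : Matrix ι ι ℝ} (hU : U * Uᵀ = 1) {i : ι}
    {u : ι → ℝ} (hUi : U *ᵥ Pi.single i 1 = u) (z : ι → ℝ) : u ⬝ᵥ U *ᵥ z = z i := by
  rw [dotProduct_mulVec, ← mulVec_transpose, ← hUi, mulVec_mulVec, mul_eq_one_comm.1 hU,
    one_mulVec, single_one_dotProduct]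

def coordReflection (k : ι) : Matrix ι ι ℝ := diagonal (Function.update 1 k (-1))

lemma coordReflection_mulVec_apply (k : ι) (x : ι → ℝ) (j : ι) :
    (coordReflection k *ᵥ x) j = if j = k then -x j else x j := by
  by_cases h : j = k <;> simp [coordReflection, mulVec_diagonal, h]

lemma coordReflection_mul_transpose (k : ι) : coordReflection k * (coordReflection k)ᵀ = 1 := by
  rw [coordReflection, diagonal_transpose, diagonal_mul_diagonal, ← diagonal_one]
  congr 1
  ext j
  by_cases h : j = k <;> simp [h]

end Matrix

def IsRotationInvariant (q₀ : (ι → ℝ) → ℝ) : Prop :=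
  ∀ U : Matrix ι ι ℝ, U * Uᵀ = 1 → ∀ y, q₀ (U *ᵥ y) = q₀ y

namespace IsRotationInvariant

variable {q₀ : (ι → ℝ) → ℝ} (hq : IsRotationInvariant q₀)
include hq

lemma setIntegral_halfSpace_mul_coord_eq_zero {i j : ι} (hji : j ≠ i) :
    ∫ z in {z | 0 ≤ z i}, q₀ z * z i * z j = 0 := by
  have hR := coordReflection_mul_transpose j
  have h := setIntegral_preimage_mulVec_of_mul_transpose_eq_one hR
    (fun z => q₀ z * z i * z j) {z | 0 ≤ z i}
  simp only [Set.preimage_ofPred_eq, hq _ hR, coordReflection_mulVec_apply, if_neg hji.symm,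
    ↓reduceIte, mul_neg, integral_neg] at h
  linarith

lemma setIntegral_nonpos_halfSpace_eq_halfSpaceMoment (i : ι) :
    ∫ z in {z | z i ≤ 0}, z i ^ 2 * q₀ z = halfSpaceMoment q₀ i := by
  have hR := coordReflection_mul_transpose i
  rw [← setIntegral_preimage_mulVec_of_mul_transpose_eq_one hR]
  simp only [Set.preimage_ofPred_eq, hq _ hR, coordReflection_mulVec_apply, ↓reduceIte,
    neg_nonpos, neg_sq]
  rfl

lemma halfSpaceMoment_pos (hmeas : AEStronglyMeasurable q₀) (hnonneg : ∀ z, 0 ≤ q₀ z)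
    (hmass : ∫ z, q₀ z ≠ 0) (hmom : Integrable fun z : ι → ℝ => ‖z‖ ^ 2 * q₀ z) (i : ι) :
    0 < halfSpaceMoment q₀ i := by
  set h : (ι → ℝ) → ℝ := fun z => z i ^ 2 * q₀ z
  have hh : 0 ≤ h := fun z => mul_nonneg (sq_nonneg _) (hnonneg z)
  have hint : Integrable h := by
    simpa only [h, sq, mul_comm, mul_left_comm] using integrable_mul_coord_mul_coord hmeas hmom i i
  refine (setIntegral_nonneg (measurableSet_le measurable_const (measurable_pi_apply i))
    fun z _ => hh z).lt_of_ne fun h0 => hmass ?_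
  have hpos : h =ᵐ[volume.restrict {z | 0 ≤ z i}] 0 :=
    (integral_eq_zero_iff_of_nonneg hh hint.restrict).1 h0.symm
  have hneg : h =ᵐ[volume.restrict {z | z i ≤ 0}] 0 :=
    (integral_eq_zero_iff_of_nonneg hh hint.restrict).1
      ((hq.setIntegral_nonpos_halfSpace_eq_halfSpaceMoment i).trans h0.symm)
  have hall : h =ᵐ[volume] 0 := by
    have hunion : {z : ι → ℝ | 0 ≤ z i} ∪ {z | z i ≤ 0} = Set.univ :=
      Set.eq_univ_of_forall fun z => le_total 0 (z i)
    have hae := (ae_restrict_union_iff _ _ _).2 ⟨hpos, hneg⟩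
    rwa [hunion, Measure.restrict_univ] at hae
  refine integral_eq_zero_of_ae ?_
  filter_upwards [hall, Measure.ae_eval_ne (fun _ => volume) i 0] with z hz hzi
  simpa [h, hzi] using hz

lemma setIntegral_halfSpace_mul_coord_smul (hmeas : AEStronglyMeasurable q₀)
    (hmom : Integrable fun z : ι → ℝ => ‖z‖ ^ 2 * q₀ z) (i : ι) :
    ∫ z in {z | 0 ≤ z i}, (q₀ z * z i) • z = halfSpaceMoment q₀ i • Pi.single i 1 := by
  ext j
  rw [eval_integral (f := fun z => (q₀ z * z i) • z)
    fun j => (integrable_mul_coord_mul_coord hmeas hmom i j).restrict]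
  rcases eq_or_ne j i with rfl | hji
  · simp only [Pi.smul_apply, smul_eq_mul, Pi.single_eq_same, mul_one, halfSpaceMoment]
    congr 1 with z
    ring
  · simp [hji, hq.setIntegral_halfSpace_mul_coord_eq_zero hji]

lemma setIntegral_halfSpace_mul_dotProduct_smul (hmeas : AEStronglyMeasurable q₀)
    (hmom : Integrable fun z : ι → ℝ => ‖z‖ ^ 2 * q₀ z) (i : ι) (w : ι → ℝ) :
    ∫ z in {z | 0 ≤ w ⬝ᵥ z}, (q₀ z * (w ⬝ᵥ z)) • z = halfSpaceMoment q₀ i • w := by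
  rcases eq_or_ne w 0 with rfl | hw
  · simp
  have hww : 0 < w ⬝ᵥ w := (Finset.sum_nonneg fun j _ => mul_self_nonneg (w j)).lt_of_ne
    fun h => hw (dotProduct_self_eq_zero.1 h.symm)
  set r := √(w ⬝ᵥ w)
  have hr : 0 < r := Real.sqrt_pos.2 hww
  have hr2 : r * r = w ⬝ᵥ w := Real.mul_self_sqrt hww.le
  obtain ⟨U, hU, hUi⟩ := exists_mul_transpose_eq_one_mulVec_single i (u := r⁻¹ • w) <| by
    rw [smul_dotProduct, dotProduct_smul, smul_smul, smul_eq_mul, ← hr2]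
    field_simp
  have hdot : ∀ z, w ⬝ᵥ U *ᵥ z = r * z i := fun z => by
    rw [← smul_inv_smul₀ hr.ne' w, smul_dotProduct, dotProduct_mulVec_of_mulVec_single_eq hU hUi,
      smul_eq_mul]
  have hpre : U.mulVec ⁻¹' {z | 0 ≤ w ⬝ᵥ z} = {z | 0 ≤ z i} := by
    ext z
    simp [hdot, mul_nonneg_iff_of_pos_left hr]
  calc ∫ z in {z | 0 ≤ w ⬝ᵥ z}, (q₀ z * (w ⬝ᵥ z)) • z
      = ∫ z in {z | 0 ≤ z i}, r • U *ᵥ ((q₀ z * z i) • z) := by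
        rw [← setIntegral_preimage_mulVec_of_mul_transpose_eq_one hU, hpre]
        congr 1 with z
        rw [hq U hU, hdot, mulVec_smul, smul_smul, mul_left_comm]
    _ = r • U *ᵥ ∫ z in {z | 0 ≤ z i}, (q₀ z * z i) • z := by
        rw [integral_smul, integral_mulVec (det_ne_zero_of_mul_transpose_eq_one hU)]
    _ = halfSpaceMoment q₀ i • w := by
        rw [hq.setIntegral_halfSpace_mul_coord_smul hmeas hmom, mulVec_smul, hUi,
          smul_comm r, smul_inv_smul₀ hr.ne']

end IsRotationInvariant

theorem stmt11_general (d : ℕ) (hd : 0 < d)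
    (q₀ : (Fin d → ℝ) → ℝ) (hq₀meas : Measurable q₀)
    (hq₀nonneg : ∀ y, 0 ≤ q₀ y) (hq₀int : (∫ y, q₀ y) = 1)
    (hrot : ∀ U : Matrix (Fin d) (Fin d) ℝ, U * Uᵀ = 1 →
      ∀ y, q₀ (U.mulVec y) = q₀ y)
    (hmom : Integrable (fun y : Fin d → ℝ => ‖y‖ ^ 2 * q₀ y))
    (S : Matrix (Fin d) (Fin d) ℝ) (hS : S.PosDef)
    (q : (Fin d → ℝ) → ℝ) (hq : ∀ x, q x = (S.det)⁻¹ * q₀ (S⁻¹.mulVec x))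
    (ℓ : Fin d → ℝ) :
    (∫ y in {y : Fin d → ℝ | 0 ≤ ℓ ⬝ᵥ y}, (q y * (ℓ ⬝ᵥ y)) • y)
        = (∫ y in {y : Fin d → ℝ | 0 ≤ y ⟨0, hd⟩}, (y ⟨0, hd⟩) ^ 2 * q₀ y) •
            ((S * S).mulVec ℓ)
      ∧ 0 < ∫ y in {y : Fin d → ℝ | 0 ≤ y ⟨0, hd⟩}, (y ⟨0, hd⟩) ^ 2 * q₀ y := by
  have hq₀rot : IsRotationInvariant q₀ := hrot
  have hdet : 0 < S.det := hS.det_pos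
  have hdot : ∀ z, ℓ ⬝ᵥ S *ᵥ z = (S *ᵥ ℓ) ⬝ᵥ z := fun z => by
    rw [dotProduct_mulVec, ← mulVec_transpose, (isHermitian_iff_isSymm.1 hS.isHermitian).eq]
  refine ⟨?_, hq₀rot.halfSpaceMoment_pos hq₀meas.aestronglyMeasurable hq₀nonneg
    (hq₀int ▸ one_ne_zero) hmom _⟩
  calc ∫ y in {y | 0 ≤ ℓ ⬝ᵥ y}, (q y * (ℓ ⬝ᵥ y)) • y
      = S.det • ∫ z in S.mulVec ⁻¹' {y | 0 ≤ ℓ ⬝ᵥ y}, (q (S *ᵥ z) * (ℓ ⬝ᵥ S *ᵥ z)) • S *ᵥ z := by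
        rw [setIntegral_preimage_mulVec hdet.ne' fun y => (q y * (ℓ ⬝ᵥ y)) • y, abs_of_pos hdet,
          smul_inv_smul₀ hdet.ne']
    _ = ∫ z in {z | 0 ≤ (S *ᵥ ℓ) ⬝ᵥ z}, S *ᵥ ((q₀ z * ((S *ᵥ ℓ) ⬝ᵥ z)) • z) := by
        rw [← integral_smul]
        simp only [Set.preimage_ofPred_eq, hdot]
        congr 1
        funext z
        rw [hq, mulVec_mulVec, nonsing_inv_mul S (isUnit_iff_ne_zero.2 hdet.ne'), one_mulVec,
          mulVec_smul, smul_smul, mul_assoc, mul_inv_cancel_left₀ hdet.ne']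
    _ = halfSpaceMoment q₀ ⟨0, hd⟩ • (S * S) *ᵥ ℓ := by
        rw [integral_mulVec hdet.ne',
          hq₀rot.setIntegral_halfSpace_mul_dotProduct_smul hq₀meas.aestronglyMeasurable hmom,
          mulVec_smul, mulVec_mulVec]

/-- For `q(x) = det(Σ)^{-1/2} q₀(Σ^{-1/2}x)` with `Σ = S·S`, `S` positive definite,
`q₀` rotationally invariant with `∫ y₁² q₀ < ∞`, and any nonzero `ℓ`,
`∫_{⟨ℓ,y⟩ ≥ 0} y ⟨ℓ,y⟩ q(y) dy = m₂(q₀) Σℓ`, where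
`m₂(q₀) = ∫ y₁² 1{y₁ ≥ 0} q₀(y) dy > 0`. -/
theorem stmt11 (d : ℕ) (hd : 0 < d)
    (q₀ : (Fin d → ℝ) → ℝ) (hq₀meas : Measurable q₀)
    (hq₀nonneg : ∀ y, 0 ≤ q₀ y) (hq₀int : (∫ y, q₀ y) = 1)
    (hrot : ∀ U : Matrix (Fin d) (Fin d) ℝ, U * Uᵀ = 1 →
      ∀ y, q₀ (U.mulVec y) = q₀ y)
    (hmom : Integrable (fun y : Fin d → ℝ => ‖y‖ ^ 2 * q₀ y))
    (S : Matrix (Fin d) (Fin d) ℝ) (hS : S.PosDef)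
    (q : (Fin d → ℝ) → ℝ) (hq : ∀ x, q x = (S.det)⁻¹ * q₀ (S⁻¹.mulVec x))
    (ℓ : Fin d → ℝ) (hℓ : ℓ ≠ 0) :
    (∫ y in {y : Fin d → ℝ | 0 ≤ ℓ ⬝ᵥ y}, (q y * (ℓ ⬝ᵥ y)) • y)
        = (∫ y in {y : Fin d → ℝ | 0 ≤ y ⟨0, hd⟩}, (y ⟨0, hd⟩) ^ 2 * q₀ y) •
            ((S * S).mulVec ℓ)
      ∧ 0 < ∫ y in {y : Fin d → ℝ | 0 ≤ y ⟨0, hd⟩}, (y ⟨0, hd⟩) ^ 2 * q₀ y :=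
  stmt11_general d hd q₀ hq₀meas hq₀nonneg hq₀int hrot hmom S hS q hq ℓ
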